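/- (Expected interference power bound) Let I = ∑_{i=c+1}^∞ D_i^{-α} ρ_i, where π λ D_i^2 ~ Gamma(i, 1), each ρ_i is independent of D_i with E[ρ_i] = k, α > 2, and c > α/2 - 1 is an integer. Then E[I] ≤ (πλ)^{α/2} k (α/2 - 1)^{-1} (c+1)^{1-α/2} + (πλ)^{α/2} k ∑_{i=c+1}^{c+⌈α/2⌉} Γ(i - α/2)/Γ(i). In particular E[I] < ∞. -/

import Mathlib

open MeasureTheory ProbabilityTheory Real
open scoped ENNReal

/-!
With `s = α / 2`, independence gives `E[D_i^{-α} ρ_i] = k (πλ)^s Γ(i - s) / Γ(i)`, so everything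
reduces to bounding `∑_{i > c} Γ(i - s) / Γ(i)`. These terms telescope:
`(s - 1) Γ(x - s) / Γ(x) = Γ(x - s) / Γ(x - 1) - Γ(x + 1 - s) / Γ(x)`, so the tail starting at
`x = c + 1 + ⌈s⌉` is at most `(s - 1)⁻¹ Γ(x - s) / Γ(x - 1)`, and log-convexity of `Γ`
(`Γ(y + δ) ≤ Γ(y) y^δ` for `δ ∈ [0, 1]`) bounds that ratio by `(c + 1)^{1 - s}`. The first `⌈s⌉`
terms are kept as they are.
-/

namespace Real

theorem Gamma_add_le_Gamma_mul_rpow {x δ : ℝ} (hx : 0 < x) (hδ₀ : 0 ≤ δ) (hδ₁ : δ ≤ 1) :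
    Gamma (x + δ) ≤ Gamma x * x ^ δ := by
  have hΓx := Gamma_pos_of_pos hx
  have hconv := convexOn_log_Gamma.2 (Set.mem_Ioi.2 hx) (Set.mem_Ioi.2 (by linarith : 0 < x + 1))
    (sub_nonneg.2 hδ₁) hδ₀ (sub_add_cancel 1 δ)
  simp only [smul_eq_mul, Function.comp_apply, Gamma_add_one hx.ne',
    log_mul hx.ne' hΓx.ne', show (1 - δ) * x + δ * (x + 1) = x + δ by ring] at hconv
  rw [← log_le_log_iff (Gamma_pos_of_pos (by linarith)) (by positivity),
    log_mul hΓx.ne' (rpow_pos_of_pos hx δ).ne', log_rpow hx]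
  linarith

theorem pow_mul_Gamma_le_Gamma_add_nat {x : ℝ} (hx : 0 < x) (n : ℕ) :
    x ^ n * Gamma x ≤ Gamma (x + n) := by
  induction n with
  | zero => simp
  | succ n ih =>
    have hxn : 0 < x + n := by positivity
    rw [Nat.cast_succ, ← add_assoc, Gamma_add_one hxn.ne', pow_succ, mul_right_comm,
      mul_comm (x + n)]
    exact mul_le_mul ih (by linarith [n.cast_nonneg (α := ℝ)]) hx.le (Gamma_pos_of_pos hxn).le

theorem Gamma_add_div_Gamma_add_nat_le_rpow {x δ : ℝ} (hx : 0 < x) (hδ₀ : 0 ≤ δ) (hδ₁ : δ ≤ 1)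
    (n : ℕ) : Gamma (x + δ) / Gamma (x + n) ≤ x ^ (δ - n) := by
  rw [div_le_iff₀ (Gamma_pos_of_pos (by positivity))]
  calc Gamma (x + δ) ≤ Gamma x * x ^ δ := Gamma_add_le_Gamma_mul_rpow hx hδ₀ hδ₁
    _ = x ^ (δ - n) * (x ^ n * Gamma x) := by
      rw [rpow_sub hx, rpow_natCast]; field_simp
    _ ≤ x ^ (δ - n) * Gamma (x + n) := by
      gcongr; exact pow_mul_Gamma_le_Gamma_add_nat hx n

section Telescoping

variable {x s : ℝ}

theorem sub_one_mul_Gamma_sub_div_Gamma (hxs : s < x) (hx : 1 < x) :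
    (s - 1) * (Gamma (x - s) / Gamma x) =
      Gamma (x - s) / Gamma (x - 1) - Gamma (x + 1 - s) / Gamma x := by
  have hΓx : Gamma x = (x - 1) * Gamma (x - 1) := by
    simpa using Gamma_add_one (s := x - 1) (by linarith)
  rw [show x + 1 - s = x - s + 1 by ring, Gamma_add_one (by linarith), hΓx]
  have := (Gamma_pos_of_pos (by linarith : 0 < x - 1)).ne'
  have : x - 1 ≠ 0 := by linarith
  field_simp
  ring

theorem sum_range_Gamma_add_sub_div_Gamma_add_le (hs : 1 < s) (hxs : s < x) (N : ℕ) :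
    ∑ n ∈ Finset.range N, Gamma (x + n - s) / Gamma (x + n) ≤
      (s - 1)⁻¹ * (Gamma (x - s) / Gamma (x - 1)) := by
  set B : ℕ → ℝ := fun n => Gamma (x + n - s) / Gamma (x + n - 1)
  have htelescope : (s - 1) * ∑ n ∈ Finset.range N, Gamma (x + n - s) / Gamma (x + n) =
      B 0 - B N := by
    rw [Finset.mul_sum, ← Finset.sum_range_sub']
    refine Finset.sum_congr rfl fun n _ => ?_
    have hn : (0 : ℝ) ≤ n := n.cast_nonneg
    rw [sub_one_mul_Gamma_sub_div_Gamma (by linarith) (by linarith)]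
    simp only [B, Nat.cast_succ]
    ring_nf
  have hBN : 0 ≤ B N := by
    have hN : (0 : ℝ) ≤ N := N.cast_nonneg
    exact div_nonneg (Gamma_pos_of_pos (by linarith)).le (Gamma_pos_of_pos (by linarith)).le
  rw [← div_eq_inv_mul, le_div_iff₀' (by linarith), htelescope]
  simpa [B] using hBN

theorem summable_Gamma_add_sub_div_Gamma_add (hs : 1 < s) (hxs : s < x) :
    Summable fun n : ℕ => Gamma (x + n - s) / Gamma (x + n) :=
  summable_of_sum_range_le
    (fun n => div_nonneg (Gamma_pos_of_pos (by linarith [n.cast_nonneg (α := ℝ)])).le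
      (Gamma_pos_of_pos (by linarith [n.cast_nonneg (α := ℝ)])).le)
    (sum_range_Gamma_add_sub_div_Gamma_add_le hs hxs)

theorem tsum_Gamma_add_sub_div_Gamma_add_le (hs : 1 < s) (hxs : s < x) :
    ∑' n : ℕ, Gamma (x + n - s) / Gamma (x + n) ≤ (s - 1)⁻¹ * (Gamma (x - s) / Gamma (x - 1)) :=
  (summable_Gamma_add_sub_div_Gamma_add hs hxs).tsum_le_of_sum_range_le
    (sum_range_Gamma_add_sub_div_Gamma_add_le hs hxs)


end Telescoping

section NatShift

variable {s : ℝ} {c : ℕ}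

theorem Gamma_nat_add_sub_div_Gamma_nat_add_eq (m : ℕ) :
    (fun j : ℕ => Gamma ((m + j : ℕ) - s) / Gamma (m + j : ℕ)) =
      fun j : ℕ => Gamma ((m : ℝ) + j - s) / Gamma ((m : ℝ) + j) := by
  simp only [Nat.cast_add]

theorem summable_Gamma_nat_sub_div_Gamma_nat (hs : 1 < s) (hcs : s - 1 < c) :
    Summable fun j : ℕ => Gamma ((c + 1 + j : ℕ) - s) / Gamma (c + 1 + j : ℕ) := by
  rw [Gamma_nat_add_sub_div_Gamma_nat_add_eq]
  exact summable_Gamma_add_sub_div_Gamma_add hs (by push_cast; linarith)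

theorem tsum_Gamma_nat_sub_div_Gamma_nat_le (hs : 1 < s) (hcs : s - 1 < c) :
    ∑' j : ℕ, Gamma ((c + 1 + j : ℕ) - s) / Gamma (c + 1 + j : ℕ) ≤
      (s - 1)⁻¹ * ((c : ℝ) + 1) ^ (1 - s) +
        ∑ i ∈ Finset.Icc (c + 1) (c + ⌈s⌉₊), Gamma ((i : ℝ) - s) / Gamma (i : ℝ) := by
  set L := ⌈s⌉₊
  have hsL : s ≤ L := Nat.le_ceil s
  have hLs : (L : ℝ) < s + 1 := Nat.ceil_lt_add_one (by linarith)
  have hL : 1 ≤ L := by exact_mod_cast (by linarith : (1 : ℝ) ≤ L)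
  have hhead : ∑ j ∈ Finset.range L, Gamma ((c + 1 + j : ℕ) - s) / Gamma (c + 1 + j : ℕ) =
      ∑ i ∈ Finset.Icc (c + 1) (c + L), Gamma ((i : ℝ) - s) / Gamma (i : ℝ) := by
    rw [← Finset.Ico_add_one_right_eq_Icc, Finset.sum_Ico_eq_sum_range,
      show c + L + 1 - (c + 1) = L by omega]
  have htail : ∑' j : ℕ, Gamma ((c + 1 + (j + L) : ℕ) - s) / Gamma (c + 1 + (j + L) : ℕ) ≤
      (s - 1)⁻¹ * ((c : ℝ) + 1) ^ (1 - s) := by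
    have hx : ((c + 1 + L : ℕ) : ℝ) - s = (c + 1) + (L - s) := by push_cast; ring
    have hx' : ((c + 1 + L : ℕ) : ℝ) - 1 = (c + 1) + ((L - 1 : ℕ) : ℝ) := by
      push_cast [Nat.cast_sub hL]; ring
    calc _ = ∑' j : ℕ, Gamma ((c + 1 + L + j : ℕ) - s) / Gamma (c + 1 + L + j : ℕ) := by
          simp only [← add_assoc, add_right_comm _ _ L]
      _ ≤ (s - 1)⁻¹ * (Gamma ((c + 1 + L : ℕ) - s) / Gamma ((c + 1 + L : ℕ) - 1)) := by
          rw [Gamma_nat_add_sub_div_Gamma_nat_add_eq]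
          exact tsum_Gamma_add_sub_div_Gamma_add_le hs (by push_cast; linarith)
      _ ≤ (s - 1)⁻¹ * ((c : ℝ) + 1) ^ (1 - s) := by
          rw [hx, hx']
          have hratio := Gamma_add_div_Gamma_add_nat_le_rpow (x := (c : ℝ) + 1) (by positivity)
            (sub_nonneg.2 hsL) (by linarith) (L - 1)
          rw [show (L : ℝ) - s - ((L - 1 : ℕ) : ℝ) = 1 - s by push_cast [Nat.cast_sub hL]; ring]
            at hratio
          gcongr
  rw [← (summable_Gamma_nat_sub_div_Gamma_nat hs hcs).sum_add_tsum_nat_add L, hhead]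
  linarith

end NatShift

end Real

theorem ProbabilityTheory.lintegral_ofReal_mul_of_indepFun {Ω : Type*} [MeasurableSpace Ω]
    {μ : Measure Ω} {X Y : Ω → ℝ} (hX : AEMeasurable X μ) (hY : AEMeasurable Y μ)
    (hXnonneg : ∀ ω, 0 ≤ X ω) (hXY : IndepFun X Y μ) :
    ∫⁻ ω, ENNReal.ofReal (X ω * Y ω) ∂μ =
      (∫⁻ ω, ENNReal.ofReal (X ω) ∂μ) * ∫⁻ ω, ENNReal.ofReal (Y ω) ∂μ := by
  simp_rw [ENNReal.ofReal_mul (hXnonneg _)]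
  exact lintegral_mul_eq_lintegral_mul_lintegral_of_indepFun'' hX.ennreal_ofReal hY.ennreal_ofReal
    (hXY.comp ENNReal.measurable_ofReal ENNReal.measurable_ofReal)

theorem expected_interference_bound_general {Ω : Type*} [MeasurableSpace Ω] (μ : Measure Ω)
    (lam α : ℝ) (hlam : 0 < lam) (hα : 2 < α)
    (k : ℕ) (c : ℕ) (hcα : (c : ℝ) > α / 2 - 1)
    (D ρ : ℕ → Ω → ℝ) (hDmeas : ∀ i, Measurable (D i)) (hρmeas : ∀ i, Measurable (ρ i))
    (hDpos : ∀ i ω, 0 < D i ω)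
    (hDmom : ∀ i : ℕ, c + 1 ≤ i →
      ∫⁻ ω, ENNReal.ofReal ((D i ω) ^ (-α)) ∂μ =
        ENNReal.ofReal ((Real.pi * lam) ^ (α / 2) *
          (Real.Gamma ((i : ℝ) - α / 2) / Real.Gamma (i : ℝ))))
    (hρmom : ∀ i : ℕ, ∫⁻ ω, ENNReal.ofReal (ρ i ω) ∂μ = (k : ℝ≥0∞))
    (hindep : ∀ i, IndepFun (D i) (ρ i) μ) :
    ∫⁻ ω, ∑' j : ℕ, ENNReal.ofReal ((D (c + 1 + j) ω) ^ (-α) * ρ (c + 1 + j) ω) ∂μ ≤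
      ENNReal.ofReal ((Real.pi * lam) ^ (α / 2) * (k : ℝ) *
        ((α / 2 - 1)⁻¹ * ((c : ℝ) + 1) ^ (1 - α / 2) +
          ∑ i ∈ Finset.Icc (c + 1) (c + ⌈α / 2⌉₊),
            Real.Gamma ((i : ℝ) - α / 2) / Real.Gamma (i : ℝ))) := by
  set A := (π * lam) ^ (α / 2)
  have hA : 0 ≤ A := by positivity
  set g : ℕ → ℝ := fun j => Gamma ((c + 1 + j : ℕ) - α / 2) / Gamma (c + 1 + j : ℕ)
  have hg : ∀ j, 0 ≤ g j := fun j =>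
    div_nonneg (Gamma_pos_of_pos (by push_cast; linarith)).le (Gamma_pos_of_pos (by positivity)).le
  have hs : 1 < α / 2 := by linarith
  have hterm : ∀ j, ∫⁻ ω, ENNReal.ofReal (D (c + 1 + j) ω ^ (-α) * ρ (c + 1 + j) ω) ∂μ =
      ENNReal.ofReal (A * g j) * k := fun j => by
    have hindep' : IndepFun (fun ω => D (c + 1 + j) ω ^ (-α)) (ρ (c + 1 + j)) μ :=
      (hindep _).comp (φ := fun x => x ^ (-α)) (ψ := id) (by fun_prop) measurable_id
    rw [lintegral_ofReal_mul_of_indepFun (by fun_prop) (hρmeas _).aemeasurable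
      (fun ω => (rpow_pos_of_pos (hDpos _ ω) _).le) hindep', hDmom _ (by omega), hρmom]
  rw [lintegral_tsum fun j => by fun_prop, tsum_congr hterm, ENNReal.tsum_mul_right,
    ← ENNReal.ofReal_tsum_of_nonneg (fun j => mul_nonneg hA (hg j)) ((summable_Gamma_nat_sub_div_Gamma_nat hs hcα).mul_left A),
    tsum_mul_left, ← ENNReal.ofReal_natCast, ← ENNReal.ofReal_mul (mul_nonneg hA (tsum_nonneg hg))]
  refine ENNReal.ofReal_le_ofReal ?_
  rw [mul_right_comm]
  gcongr
  exact tsum_Gamma_nat_sub_div_Gamma_nat_le hs hcα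

/-- Expected interference power bound: let `I = ∑_{i=c+1}^∞ D_i^{-α} ρ_i`, where the
`D_i` are the ordered PPP distances (so `E[D_i^{-α}] = (πλ)^{α/2} Γ(i-α/2)/Γ(i)`), each
`ρ_i` is independent of `D_i` with `E[ρ_i] = k`, `α > 2`, and `c > α/2 - 1`.  Then
`E[I] ≤ (πλ)^{α/2} k ((α/2-1)⁻¹ (c+1)^{1-α/2} + ∑_{i=c+1}^{c+⌈α/2⌉} Γ(i-α/2)/Γ(i))`;
in particular `E[I] < ∞`. -/
theorem expected_interference_bound {Ω : Type*} [MeasurableSpace Ω] (μ : Measure Ω)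
    [IsProbabilityMeasure μ] (lam α : ℝ) (hlam : 0 < lam) (hα : 2 < α)
    (k : ℕ) (hk : 1 ≤ k) (c : ℕ) (hc : 1 ≤ c) (hcα : (c : ℝ) > α / 2 - 1)
    (D ρ : ℕ → Ω → ℝ) (hDmeas : ∀ i, Measurable (D i)) (hρmeas : ∀ i, Measurable (ρ i))
    (hDpos : ∀ i ω, 0 < D i ω) (hρpos : ∀ i ω, 0 ≤ ρ i ω)
    (hDmom : ∀ i : ℕ, c + 1 ≤ i →
      ∫⁻ ω, ENNReal.ofReal ((D i ω) ^ (-α)) ∂μ =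
        ENNReal.ofReal ((Real.pi * lam) ^ (α / 2) *
          (Real.Gamma ((i : ℝ) - α / 2) / Real.Gamma (i : ℝ))))
    (hρmom : ∀ i : ℕ, ∫⁻ ω, ENNReal.ofReal (ρ i ω) ∂μ = (k : ℝ≥0∞))
    (hindep : ∀ i, IndepFun (D i) (ρ i) μ) :
    ∫⁻ ω, ∑' j : ℕ, ENNReal.ofReal ((D (c + 1 + j) ω) ^ (-α) * ρ (c + 1 + j) ω) ∂μ ≤
      ENNReal.ofReal ((Real.pi * lam) ^ (α / 2) * (k : ℝ) *
        ((α / 2 - 1)⁻¹ * ((c : ℝ) + 1) ^ (1 - α / 2) +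
          ∑ i ∈ Finset.Icc (c + 1) (c + ⌈α / 2⌉₊),
            Real.Gamma ((i : ℝ) - α / 2) / Real.Gamma (i : ℝ))) :=
  expected_interference_bound_general μ lam α hlam hα k c hcα D ρ hDmeas hρmeas hDpos hDmom hρmom
    hindep
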